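/- Let R be a commutative ring, m ≥ 1, and let A be a 2m×2m matrix over R with m×m blocks A11, A12, A21, A22, and Δ := det(A11) • A22 − A21 · adj(A11) · A12. Then det(A11)^m • B11 = det(Δ) • adj(A11) + adj(A11) · A12 · adj(Δ) · A21 · adj(A11), where B11 denotes the top-left m×m block of the adjugate matrix adj(A). -/

import Mathlib

/-!
Over a field, with `A` and the block matrix `M = fromBlocks A B C D` invertible, write
`S = D - C A⁻¹ B`, so that `Δ = det A • S`, `det M = det A * det S`, `adj A = det A • A⁻¹` and
`adj M = det M • M⁻¹`. The top-left block of `M⁻¹` is `A⁻¹ + A⁻¹ B S⁻¹ C A⁻¹`, and multiplying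
through by `det A ^ m` turns this into the identity. Both sides are integer polynomials in the
entries of `M`, so it suffices to prove it for the generic matrix over `ℤ[X_ij]`, a domain in
which `det A` and `det M` are nonzero; there it follows from the field case in the fraction field.
-/

open Matrix

namespace Matrix

section

variable {m o R S : Type*} [Fintype m] [DecidableEq m] [Fintype o] [DecidableEq o]
  [CommRing R] [CommRing S]

theorem _root_.RingHom.mapMatrix_smul (f : R →+* S) (r : R) (M : Matrix m m R) :
    f.mapMatrix (r • M) = f r • f.mapMatrix M :=
  map_smul' f r M (map_mul f)

theorem _root_.RingHom.mapMatrix_toBlocks₁₁ (f : R →+* S) (M : Matrix (m ⊕ o) (m ⊕ o) R) :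
    f.mapMatrix M.toBlocks₁₁ = (f.mapMatrix M).toBlocks₁₁ :=
  rfl

theorem adjugate_eq_det_smul_invOf (M : Matrix m m R) [Invertible M] :
    M.adjugate = M.det • ⅟M := by
  rw [← Matrix.invOf_mul_cancel_left M M.adjugate, mul_adjugate, Matrix.mul_smul, Matrix.mul_one]

theorem det_toBlocks₁₁_mvPolynomialX_ne_zero [Nontrivial R] :
    (mvPolynomialX (m ⊕ o) (m ⊕ o) R).toBlocks₁₁.det ≠ 0 := by
  intro h
  let evalOne := MvPolynomial.eval fun p : (m ⊕ o) × (m ⊕ o) ↦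
    (1 : Matrix (m ⊕ o) (m ⊕ o) R) p.1 p.2
  have := evalOne.map_det (mvPolynomialX (m ⊕ o) (m ⊕ o) R).toBlocks₁₁
  rw [h, map_zero, RingHom.mapMatrix_toBlocks₁₁, mvPolynomialX_mapMatrix_eval, ← fromBlocks_one,
    toBlocks_fromBlocks₁₁, det_one] at this
  exact zero_ne_one this

end

variable {n R S : Type*} [Fintype n] [DecidableEq n] [CommRing R] [CommRing S]

def ffSchurComplement (A B C D : Matrix n n R) : Matrix n n R :=
  A.det • D - C * A.adjugate * B

theorem _root_.RingHom.map_ffSchurComplement (f : R →+* S) (A B C D : Matrix n n R) :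
    f.mapMatrix (ffSchurComplement A B C D) =
      ffSchurComplement (f.mapMatrix A) (f.mapMatrix B) (f.mapMatrix C) (f.mapMatrix D) := by
  simp only [ffSchurComplement, map_sub, map_mul, f.mapMatrix_smul, f.map_det, f.map_adjugate]

theorem _root_.RingHom.mapMatrix_fromBlocks (f : R →+* S) (A B C D : Matrix n n R) :
    f.mapMatrix (fromBlocks A B C D) =
      fromBlocks (f.mapMatrix A) (f.mapMatrix B) (f.mapMatrix C) (f.mapMatrix D) :=
  fromBlocks_map A B C D f

def FFSchurAdjugateFormula (A B C D : Matrix n n R) : Prop :=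
  A.det ^ Fintype.card n • (fromBlocks A B C D).adjugate.toBlocks₁₁ =
    (ffSchurComplement A B C D).det • A.adjugate +
      A.adjugate * B * (ffSchurComplement A B C D).adjugate * C * A.adjugate

theorem FFSchurAdjugateFormula.map (f : R →+* S) {A B C D : Matrix n n R}
    (h : FFSchurAdjugateFormula A B C D) :
    FFSchurAdjugateFormula (f.mapMatrix A) (f.mapMatrix B) (f.mapMatrix C) (f.mapMatrix D) := by
  simpa only [FFSchurAdjugateFormula, map_add, map_mul, f.mapMatrix_smul, map_pow, f.map_det,
    f.map_adjugate, f.map_ffSchurComplement, f.mapMatrix_fromBlocks, f.mapMatrix_toBlocks₁₁]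
    using congr_arg f.mapMatrix h

theorem FFSchurAdjugateFormula.of_map {f : R →+* S} (hf : Function.Injective f)
    {A B C D : Matrix n n R}
    (h : FFSchurAdjugateFormula (f.mapMatrix A) (f.mapMatrix B) (f.mapMatrix C) (f.mapMatrix D)) :
    FFSchurAdjugateFormula A B C D := by
  apply Matrix.map_injective hf
  simpa only [FFSchurAdjugateFormula, ← f.mapMatrix_apply, map_add, map_mul, f.mapMatrix_smul,
    map_pow, f.map_det, f.map_adjugate, f.map_ffSchurComplement, f.mapMatrix_fromBlocks,
    f.mapMatrix_toBlocks₁₁] using h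

theorem ffSchurAdjugateFormula_of_invertible (A B C D : Matrix n n R) [Invertible A]
    [Invertible (fromBlocks A B C D)] : FFSchurAdjugateFormula A B C D := by
  cases isEmpty_or_nonempty n
  · exact Subsingleton.elim _ _
  let := invertibleOfFromBlocks₁₁Invertible A B C D
  set S := D - C * ⅟A * B
  obtain ⟨k, hk⟩ := Nat.exists_eq_add_one_of_ne_zero (Fintype.card_ne_zero (α := n))
  have hadjA : A.adjugate = A.det • ⅟A := adjugate_eq_det_smul_invOf A
  have hΔ : ffSchurComplement A B C D = A.det • S := by
    rw [ffSchurComplement, hadjA, smul_sub, Matrix.mul_smul, Matrix.smul_mul]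
  have hadjM : (fromBlocks A B C D).adjugate = (A.det * S.det) • ⅟(fromBlocks A B C D) := by
    rw [adjugate_eq_det_smul_invOf, det_fromBlocks₁₁]
  rw [FFSchurAdjugateFormula, hadjM, invOf_fromBlocks₁₁_eq, hΔ, det_smul, adjugate_smul,
    adjugate_eq_det_smul_invOf S, hadjA, hk, fromBlocks_smul, toBlocks_fromBlocks₁₁,
    Nat.add_sub_cancel]
  simp only [smul_add, smul_smul, Matrix.mul_smul, Matrix.smul_mul, Matrix.mul_assoc]
  match_scalars <;> ring

theorem ffSchurAdjugateFormula_of_det_ne_zero [IsDomain R] {A B C D : Matrix n n R}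
    (hA : A.det ≠ 0) (hM : (fromBlocks A B C D).det ≠ 0) : FFSchurAdjugateFormula A B C D := by
  let f := algebraMap R (FractionRing R)
  have hf : Function.Injective f := IsFractionRing.injective R (FractionRing R)
  have isUnit_det_map {k : Type _} [Fintype k] [DecidableEq k] {N : Matrix k k R}
      (hN : N.det ≠ 0) : IsUnit (f.mapMatrix N).det := by
    rw [← f.map_det]
    exact ((map_ne_zero_iff f hf).2 hN).isUnit
  let := invertibleOfIsUnitDet _ (isUnit_det_map hA)
  let := invertibleOfIsUnitDet _ (f.mapMatrix_fromBlocks A B C D ▸ isUnit_det_map hM)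
  exact .of_map hf (ffSchurAdjugateFormula_of_invertible _ _ _ _)

theorem ffSchurAdjugateFormula (A B C D : Matrix n n R) : FFSchurAdjugateFormula A B C D := by
  let X := mvPolynomialX (n ⊕ n) (n ⊕ n) ℤ
  let φ := MvPolynomial.eval₂Hom (Int.castRingHom R) fun p : (n ⊕ n) × (n ⊕ n) ↦
    fromBlocks A B C D p.1 p.2
  have hgeneric : FFSchurAdjugateFormula X.toBlocks₁₁ X.toBlocks₁₂ X.toBlocks₂₁ X.toBlocks₂₂ :=
    ffSchurAdjugateFormula_of_det_ne_zero det_toBlocks₁₁_mvPolynomialX_ne_zero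
      (by rw [fromBlocks_toBlocks]; exact det_mvPolynomialX_ne_zero _ ℤ)
  obtain ⟨hA, hB, hC, hD⟩ := fromBlocks_inj.1 <| show
      fromBlocks (φ.mapMatrix X.toBlocks₁₁) (φ.mapMatrix X.toBlocks₁₂) (φ.mapMatrix X.toBlocks₂₁)
        (φ.mapMatrix X.toBlocks₂₂) = fromBlocks A B C D by
    rw [← RingHom.mapMatrix_fromBlocks, fromBlocks_toBlocks]
    exact mvPolynomialX_map_eval₂ _ _
  simpa only [hA, hB, hC, hD] using hgeneric.map φ

end Matrix

theorem ffSchur_adjugate_block11_general {R : Type*} [CommRing R] (m : ℕ)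
    (A11 A12 A21 A22 : Matrix (Fin m) (Fin m) R) :
    A11.det ^ m • (Matrix.fromBlocks A11 A12 A21 A22).adjugate.toBlocks₁₁ =
      (A11.det • A22 - A21 * A11.adjugate * A12).det • A11.adjugate +
        A11.adjugate * A12 * (A11.det • A22 - A21 * A11.adjugate * A12).adjugate * A21 *
          A11.adjugate := by
  simpa only [FFSchurAdjugateFormula, ffSchurComplement, Fintype.card_fin] using
    ffSchurAdjugateFormula A11 A12 A21 A22

/-- For a commutative ring `R`, `m ≥ 1`, and a `2m × 2m` matrix `A` over `R`
with `m × m` blocks `A11, A12, A21, A22`, letting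
`Δ = det(A11) • A22 - A21 * adj(A11) * A12`, the top-left block `B11` of `adj(A)`
satisfies `det(A11) ^ m • B11 = det(Δ) • adj(A11) + adj(A11) * A12 * adj(Δ) * A21 * adj(A11)`. -/
theorem ffSchur_adjugate_block11 {R : Type*} [CommRing R] (m : ℕ) (hm : 1 ≤ m)
    (A11 A12 A21 A22 : Matrix (Fin m) (Fin m) R) :
    A11.det ^ m • (Matrix.fromBlocks A11 A12 A21 A22).adjugate.toBlocks₁₁ =
      (A11.det • A22 - A21 * A11.adjugate * A12).det • A11.adjugate +
        A11.adjugate * A12 * (A11.det • A22 - A21 * A11.adjugate * A12).adjugate * A21 *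
          A11.adjugate :=
  ffSchur_adjugate_block11_general m A11 A12 A21 A22
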